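/- (Chu's identity) Let s ≥ 2 and n be natural numbers, let x_1, …, x_s and z be complex numbers. Then the sum, over all tuples (k_1, …, k_s) of natural numbers with k_1 + ⋯ + k_s = n, of the product over i from 1 to s of C(x_i + k_i·z, k_i), equals the sum over k from 0 to n of binom(k+s−2, k)·C(x_1 + ⋯ + x_s + n·z − k, n−k)·z^k, where binom(k+s−2,k) is the ordinary binomial coefficient of natural numbers. -/

import Mathlib

/-!
Splitting off the first variable reduces Chu's identity in `s + 1` variables to the case `s = 2`
(a Hagen–Rothe type convolution), applied termwise to the identity in `s` variables, followed by
the hockey-stick identity `∑_{j ≤ k} multichoose m j = multichoose (m + 1) k`.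

The case `s = 2` goes by induction on `n`. For fixed `x`, both sides are polynomials in `y`, and
Pascal's rule shows that raising `y` by `1` adds to each side its own instance for `n - 1`; so their
difference is `1`-periodic, hence constant. Where `x + y + n z = n - 1` the right side collapses to
`z ^ n`, while upper negation and trinomial revision turn the left side into the `n`-th forward
difference of `t ↦ C(x + t z, n)`, a polynomial of degree `n` with leading coefficient `z ^ n / n!`.
-/

open Finset Polynomial

noncomputable def genBinom (x : ℂ) (k : ℕ) : ℂ := (∏ i ∈ Finset.range k, (x - i)) / (Nat.factorial k)

theorem Ring.choose_eq_prod_range_div {K : Type*} [Field K] [CharZero K] (r : K) (n : ℕ) :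
    Ring.choose r n = (∏ j ∈ range n, (r - j)) / n.factorial := by
  rw [Ring.choose_eq_smul, ← aeval_eq_smeval, aeval_def, eval₂_eq_eval_map, descPochhammer_map,
    descPochhammer_eval_eq_prod_range, smul_eq_mul, div_eq_inv_mul]

theorem Polynomial.eq_zero_of_periodic_of_isRoot {R : Type*} [CommRing R] [IsDomain R]
    [CharZero R] {p : R[X]} (hp : Function.Periodic p.eval 1) {a : R} (ha : p.IsRoot a) :
    p = 0 := by
  refine p.eq_zero_of_infinite_isRoot (Set.infinite_of_injective_forall_mem
    (f := fun m : ℕ ↦ a + m) (fun _ _ h ↦ by simpa using h) fun m ↦ ?_)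
  simpa [IsRoot, add_comm] using (hp.nat_mul m a).trans ha

theorem Polynomial.fwdDiff_iter_eval_eq_factorial_mul_coeff {R : Type*} [CommRing R] {P : R[X]}
    {n : ℕ} (hP : P.natDegree ≤ n) (y : R) :
    (fwdDiff 1)^[n] P.eval y = n.factorial * P.coeff n := by
  rcases hP.lt_or_eq with hlt | rfl
  · simp [fwdDiff_iter_eq_zero_of_degree_lt hlt, coeff_eq_zero_of_natDegree_lt hlt]
  · simp [fwdDiff_iter_degree_eq_factorial, mul_comm]

theorem Finset.Nat.sum_antidiagonal_sum_antidiagonal_fst {M : Type*} [AddCommMonoid M]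
    (f : ℕ → ℕ → ℕ → M) (n : ℕ) :
    ∑ p ∈ antidiagonal n, ∑ q ∈ antidiagonal p.1, f q.1 q.2 p.2 =
      ∑ p ∈ antidiagonal n, ∑ q ∈ antidiagonal p.2, f p.1 q.1 q.2 := by
  simp only [sum_sigma']
  apply sum_nbij' (fun ⟨⟨_, l⟩, ⟨i, j⟩⟩ ↦ ⟨(i, j + l), (j, l)⟩)
    (fun ⟨⟨i, _⟩, ⟨j, l⟩⟩ ↦ ⟨(i + j, l), (i, j)⟩) <;> aesop (add simp [add_assoc])

theorem Finset.Nat.sum_antidiagonalTuple_succ {M : Type*} [AddCommMonoid M] (k n : ℕ)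
    (f : (Fin (k + 1) → ℕ) → M) :
    ∑ x ∈ antidiagonalTuple (k + 1) n, f x =
      ∑ p ∈ antidiagonal n, ∑ t ∈ antidiagonalTuple k p.2, f (Fin.cons p.1 t) := by
  rw [sum_sigma']
  apply sum_nbij' (fun x ↦ ⟨(x 0, ∑ i : Fin k, x i.succ), Fin.tail x⟩) (fun q ↦ Fin.cons q.1.1 q.2)
  all_goals simp +contextual [mem_antidiagonalTuple, Fin.sum_univ_succ, Fin.tail]

theorem Nat.sum_antidiagonal_multichoose (m k : ℕ) :
    ∑ q ∈ antidiagonal k, m.multichoose q.2 = (m + 1).multichoose k := by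
  induction k with
  | zero => simp
  | succ k ih => rw [Nat.sum_antidiagonal_succ, ih, Nat.multichoose_succ_succ, add_comm]

section BinomialRing

variable {R : Type*} [CommRing R] [BinomialRing R]

noncomputable def rotheSum (z x y : R) (n : ℕ) : R :=
  ∑ p ∈ antidiagonal n, Ring.choose (x + p.1 * z) p.1 * Ring.choose (y + p.2 * z) p.2

/-- With `u = x₁ + ⋯ + xₛ + n z`, `chuSum z (s - 1) u n` is the right-hand side of Chu's identity,
indexed by `p = (n - k, k)`; note `multichoose (s - 1) k = C(k + s - 2, k)`. -/
noncomputable def chuSum (z : R) (m : ℕ) (u : R) (n : ℕ) : R :=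
  ∑ p ∈ antidiagonal n, (m.multichoose p.2 : R) * Ring.choose (u - p.2) p.1 * z ^ p.2

theorem map_rotheSum {S : Type*} [CommRing S] [BinomialRing S] (f : R →+* S) (z x y : R)
    (n : ℕ) : f (rotheSum z x y n) = rotheSum (f z) (f x) (f y) n := by
  simp [rotheSum, Ring.map_choose]

theorem map_chuSum {S : Type*} [CommRing S] [BinomialRing S] (f : R →+* S) (z : R) (m : ℕ)
    (u : R) (n : ℕ) : f (chuSum z m u n) = chuSum (f z) m (f u) n := by
  simp [chuSum, Ring.map_choose]

theorem rotheSum_add_one (z x y : R) (n : ℕ) :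
    rotheSum z x (y + 1) (n + 1) = rotheSum z x y (n + 1) + rotheSum z x (y + z) n := by
  have pascal (b : ℕ) : Ring.choose (y + 1 + (b + 1 : ℕ) * z) (b + 1) =
      Ring.choose (y + (b + 1 : ℕ) * z) (b + 1) + Ring.choose (y + z + b * z) b := by
    rw [add_right_comm, Ring.choose_succ_succ, add_comm]
    push_cast
    ring_nf
  simp only [rotheSum, Nat.sum_antidiagonal_succ', pascal, mul_add, sum_add_distrib,
    Ring.choose_zero_right]
  abel

theorem chuSum_add_one (z : R) (m : ℕ) (u : R) (n : ℕ) :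
    chuSum z m (u + 1) (n + 1) = chuSum z m u (n + 1) + chuSum z m u n := by
  have pascal (c j : ℕ) : Ring.choose (u + 1 - j) (c + 1) =
      Ring.choose (u - j) (c + 1) + Ring.choose (u - j) c := by
    rw [show u + 1 - j = u - j + 1 by ring, Ring.choose_succ_succ, add_comm]
  simp only [chuSum, Nat.sum_antidiagonal_succ, pascal, mul_add, add_mul, sum_add_distrib,
    Ring.choose_zero_right]
  abel

theorem chuSum_natCast_sub_one (z : R) (m n : ℕ) :
    chuSum z m (n - 1) n = m.multichoose n * z ^ n := by
  cases n with
  | zero => simp [chuSum]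
  | succ n =>
    rw [chuSum, Nat.sum_antidiagonal_succ, sum_eq_zero fun p hp ↦ ?_]
    · simp
    · have : ((n + 1 : ℕ) : R) - 1 - p.2 = p.1 := by
        rw [← mem_antidiagonal.mp hp]
        push_cast
        ring
      dsimp only
      rw [this, Ring.choose_natCast, Nat.choose_succ_self, Nat.cast_zero, mul_zero, zero_mul]

theorem chuSum_zero (z u : R) (n : ℕ) : chuSum z 0 u n = Ring.choose u n := by
  cases n with
  | zero => simp [chuSum]
  | succ n => simp [chuSum, Nat.sum_antidiagonal_succ', Nat.multichoose_zero_succ]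

theorem chuSum_succ (z : R) (m : ℕ) (u : R) (n : ℕ) :
    chuSum z (m + 1) u n =
      ∑ p ∈ antidiagonal n, (m.multichoose p.2 : R) * z ^ p.2 * chuSum z 1 (u - p.2) p.1 := by
  let f (c i j : ℕ) : R := m.multichoose j * (Ring.choose (u - j - i) c * z ^ (i + j))
  have inner (p : ℕ × ℕ) : (m.multichoose p.2 : R) * z ^ p.2 * chuSum z 1 (u - p.2) p.1 =
      ∑ q ∈ antidiagonal p.1, f q.1 q.2 p.2 := by
    rw [chuSum, mul_sum]
    exact sum_congr rfl fun q _ ↦ by rw [Nat.multichoose_one]; ring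
  have outer (p : ℕ × ℕ) : ∑ q ∈ antidiagonal p.2, f p.1 q.1 q.2 =
      ((m + 1).multichoose p.2 : R) * Ring.choose (u - p.2) p.1 * z ^ p.2 := by
    rw [← Nat.sum_antidiagonal_multichoose, Nat.cast_sum, sum_mul, sum_mul]
    refine sum_congr rfl fun q hq ↦ ?_
    rw [← mem_antidiagonal.mp hq]
    simp only [f]
    push_cast
    ring_nf
  rw [sum_congr rfl fun p _ ↦ inner p, Nat.sum_antidiagonal_sum_antidiagonal_fst, chuSum]
  exact sum_congr rfl fun p _ ↦ (outer p).symm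

end BinomialRing

section Field

variable {K : Type*} [Field K] [CharZero K]

theorem fwdDiff_iter_choose_add_mul (x z : K) (n : ℕ) (t : K) :
    (fwdDiff 1)^[n] (fun t ↦ Ring.choose (x + t * z) n) t = z ^ n := by
  set P : K[X] := C (n.factorial : K)⁻¹ * ∏ j ∈ range n, (C z * X + C (x - j))
  have hP : P.eval = fun t ↦ Ring.choose (x + t * z) n := funext fun t ↦ by
    simp only [P, eval_mul, eval_C, eval_prod, eval_add, eval_X, Ring.choose_eq_prod_range_div,
      inv_mul_eq_div]
    congr 1
    exact prod_congr rfl fun j _ ↦ by ring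
  have hdeg : P.natDegree ≤ n := by
    refine (natDegree_C_mul_le _ _).trans ((natDegree_prod_le _ _).trans ?_)
    simpa using sum_le_sum fun j (_ : j ∈ range n) ↦ natDegree_linear_le (a := z) (b := x - j)
  have hcoeff : P.coeff n = (n.factorial : K)⁻¹ * z ^ n := by
    have := coeff_prod_of_natDegree_le (range n) (fun j ↦ C z * X + C (x - j)) 1
      fun j _ ↦ natDegree_linear_le
    simp_all [P]
  rw [← hP, fwdDiff_iter_eval_eq_factorial_mul_coeff hdeg, hcoeff,
    mul_inv_cancel_left₀ (Nat.cast_ne_zero.mpr n.factorial_ne_zero)]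

theorem rotheSum_eq_pow_of_add_eq {z x y : K} {n : ℕ} (h : x + y + n * z = n - 1) :
    rotheSum z x y n = z ^ n := by
  rw [← fwdDiff_iter_choose_add_mul x z n 0, fwdDiff_iter_eq_sum_shift, rotheSum,
    Nat.sum_antidiagonal_eq_sum_range_succ_mk]
  refine sum_congr rfl fun a ha ↦ ?_
  obtain ⟨c, rfl⟩ := Nat.exists_eq_add_of_le (Nat.lt_succ_iff.mp (mem_range.mp ha))
  simp only [Nat.add_sub_cancel_left, zero_add, nsmul_one]
  set v := x + a * z
  have hneg : y + c * z = -(v - a - c + 1) := by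
    push_cast at h
    linear_combination h
  rw [hneg, Ring.choose_neg, show v - a - c + 1 + c - 1 = v - a by ring, mul_smul, natCast_zsmul,
    Ring.choose_smul_choose v (Nat.le_add_right a c), Nat.add_sub_cancel_left, mul_smul_comm,
    Units.smul_def, Int.coe_negOnePow_natCast]

theorem rotheSum_eq_chuSum (z x y : K) (n : ℕ) :
    rotheSum z x y n = chuSum z 1 (x + y + n * z) n := by
  induction n generalizing y with
  | zero => simp [rotheSum, chuSum]
  | succ n ih =>
    set P : K[X] := rotheSum (C z) (C x) X (n + 1) -
      chuSum (C z) 1 (C x + X + ((n + 1 : ℕ) : K[X]) * C z) (n + 1)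
    have hP (w : K) : P.eval w =
        rotheSum z x w (n + 1) - chuSum z 1 (x + w + (n + 1 : ℕ) * z) (n + 1) := by
      rw [← coe_evalRingHom, map_sub, map_rotheSum, map_chuSum]
      simp
    have periodic : Function.Periodic P.eval 1 := fun w ↦ by
      change P.eval (w + 1) = P.eval w
      rw [hP, hP, rotheSum_add_one,
        show x + (w + 1) + (n + 1 : ℕ) * z = x + w + (n + 1 : ℕ) * z + 1 by ring,
        chuSum_add_one, ih, show x + (w + z) + n * z = x + w + (n + 1 : ℕ) * z by push_cast; ring]
      ring
    have root : P.IsRoot ((n + 1 : ℕ) - 1 - x - (n + 1 : ℕ) * z) := by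
      have hu : x + ((n + 1 : ℕ) - 1 - x - (n + 1 : ℕ) * z) + (n + 1 : ℕ) * z =
          (n + 1 : ℕ) - 1 := by ring
      rw [IsRoot, hP, rotheSum_eq_pow_of_add_eq hu, hu, chuSum_natCast_sub_one,
        Nat.multichoose_one, Nat.cast_one, one_mul, sub_self]
    simpa [hP, sub_eq_zero] using congr_arg (eval y) (eq_zero_of_periodic_of_isRoot periodic root)

theorem sum_antidiagonal_choose_mul_chuSum (z x y : K) (m n : ℕ) :
    ∑ p ∈ antidiagonal n, Ring.choose (x + p.1 * z) p.1 * chuSum z m (y + p.2 * z) p.2 =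
      chuSum z (m + 1) (x + y + n * z) n := by
  let g (a c j : ℕ) : K := m.multichoose j * z ^ j *
    (Ring.choose (x + a * z) a * Ring.choose (y - j + j * z + c * z) c)
  have inner (p : ℕ × ℕ) : Ring.choose (x + p.1 * z) p.1 * chuSum z m (y + p.2 * z) p.2 =
      ∑ q ∈ antidiagonal p.2, g p.1 q.1 q.2 := by
    rw [chuSum, mul_sum]
    refine sum_congr rfl fun q hq ↦ ?_
    rw [← mem_antidiagonal.mp hq]
    simp only [g]
    push_cast
    ring_nf
  have outer (p : ℕ × ℕ) : ∑ q ∈ antidiagonal p.1, g q.1 q.2 p.2 =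
      m.multichoose p.2 * z ^ p.2 * rotheSum z x (y - p.2 + p.2 * z) p.1 := by
    rw [rotheSum, mul_sum]
  rw [sum_congr rfl fun p _ ↦ inner p, ← Nat.sum_antidiagonal_sum_antidiagonal_fst, chuSum_succ]
  refine sum_congr rfl fun p hp ↦ ?_
  rw [outer, rotheSum_eq_chuSum, ← mem_antidiagonal.mp hp]
  push_cast
  ring_nf

theorem sum_antidiagonalTuple_prod_choose (z : K) (m n : ℕ) (x : Fin (m + 1) → K) :
    ∑ k ∈ Finset.Nat.antidiagonalTuple (m + 1) n, ∏ i, Ring.choose (x i + k i * z) (k i) =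
      chuSum z m ((∑ i, x i) + n * z) n := by
  induction m generalizing n with
  | zero => simp [chuSum_zero]
  | succ m ih =>
    have split (p : ℕ × ℕ) :
        ∑ t ∈ Finset.Nat.antidiagonalTuple (m + 1) p.2,
          ∏ i, Ring.choose (x i + (Fin.cons p.1 t : Fin (m + 2) → ℕ) i * z)
            ((Fin.cons p.1 t : Fin (m + 2) → ℕ) i) =
        Ring.choose (x 0 + p.1 * z) p.1 *
          chuSum z m ((∑ i : Fin (m + 1), x i.succ) + p.2 * z) p.2 := by
      rw [← ih, mul_sum]
      exact sum_congr rfl fun t _ ↦ by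
        rw [Fin.prod_univ_succ]
        simp only [Fin.cons_zero, Fin.cons_succ]
    rw [Nat.sum_antidiagonalTuple_succ, sum_congr rfl fun p _ ↦ split p,
      sum_antidiagonal_choose_mul_chuSum, Fin.sum_univ_succ x, add_assoc]

end Field

theorem genBinom_eq_choose (x : ℂ) (k : ℕ) : genBinom x k = Ring.choose x k :=
  (Ring.choose_eq_prod_range_div x k).symm

/-- Chu's identity. -/
theorem chu_identity (s : ℕ) (hs : 2 ≤ s) (n : ℕ) (x : Fin s → ℂ) (z : ℂ) :
    ∑ k ∈ Finset.Nat.antidiagonalTuple s n, ∏ i, genBinom (x i + k i * z) (k i) =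
      ∑ k ∈ Finset.range (n + 1),
        ((k + s - 2).choose k : ℂ) * genBinom ((∑ i, x i) + n * z - k) (n - k) * z ^ k := by
  obtain ⟨m, rfl⟩ : ∃ m, s = m + 1 := ⟨s - 1, by omega⟩
  simp only [genBinom_eq_choose]
  rw [sum_antidiagonalTuple_prod_choose, chuSum, ← Nat.sum_antidiagonal_swap,
    Nat.sum_antidiagonal_eq_sum_range_succ_mk]
  refine sum_congr rfl fun k _ ↦ ?_
  rw [Prod.swap_prod_mk, Nat.multichoose_eq, show m + k - 1 = k + (m + 1) - 2 by omega]
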